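/- Let k ≥ 2 and let S = S_{I_k} be the combinatorial Rees matrix semigroup whose structure matrix is the k×k identity matrix. A polynomial p over S is identically 0 if and only if some connected component of the bipartite graph B(p) is not consistent, i.e., contains vertices i_A and j_B arising from constants with i ≠ j. -/

import Mathlib

/-- Multiplication in the combinatorial Rees matrix semigroup `S_{I_k}` whose
structure matrix is the `k×k` identity matrix (zero modeled as `none`). -/
def cmulI (k : ℕ) : Option (Fin k × Fin k) → Option (Fin k × Fin k) →
    Option (Fin k × Fin k)
  | some (i, l), some (j, c) => if l = j then some (i, c) else none
  | _, _ => none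

/-- Product of a nonempty list. -/
def prodWith {α : Type} (f : α → α → α) : List α → Option α
  | [] => none
  | a :: t => some (t.foldl f a)

/-- `a`, `b` occur as a consecutive pair in the word `w`. -/
def consec {α : Type} (w : List α) (a b : α) : Prop :=
  ∃ l₁ l₂ : List α, w = l₁ ++ a :: b :: l₂

/-- First part of the bi-expression of a letter (a variable `v` gives `v₁`; a
constant `[i,λ]` gives the index `i`). -/
def fstV {V : Type} {k : ℕ} : (V ⊕ (Fin k × Fin k)) → V ⊕ Fin k :=
  Sum.map id Prod.fst

/-- Second part of the bi-expression of a letter. -/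
def sndV {V : Type} {k : ℕ} : (V ⊕ (Fin k × Fin k)) → V ⊕ Fin k :=
  Sum.map id Prod.snd

/-- Edges of the bipartite graph `B(p)`: the left summand is the side `X` of first
parts, the right summand the side `Y` of second parts; each consecutive pair of
letters `x y` contributes the (undirected) edge between `(sndV x) ∈ Y` and
`(fstV y) ∈ X`. -/
def edgeB {V : Type} {k : ℕ} (w : List (V ⊕ (Fin k × Fin k))) :
    ((V ⊕ Fin k) ⊕ (V ⊕ Fin k)) → ((V ⊕ Fin k) ⊕ (V ⊕ Fin k)) → Prop :=
  fun a b =>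
    ∃ x y, consec w x y ∧
      ((a = Sum.inr (sndV x) ∧ b = Sum.inl (fstV y)) ∨
       (b = Sum.inr (sndV x) ∧ a = Sum.inl (fstV y)))

/-- Two vertices lie in the same connected component of `B(p)`. -/
def reachB {V : Type} {k : ℕ} (w : List (V ⊕ (Fin k × Fin k))) :
    ((V ⊕ Fin k) ⊕ (V ⊕ Fin k)) → ((V ⊕ Fin k) ⊕ (V ⊕ Fin k)) → Prop :=
  Relation.ReflTransGen (edgeB w)

/-- The index carried by a constant-vertex (`none` for variable-vertices). -/
def constVal {V : Type} {k : ℕ} :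
    ((V ⊕ Fin k) ⊕ (V ⊕ Fin k)) → Option (Fin k)
  | Sum.inl (Sum.inr i) => some i
  | Sum.inr (Sum.inr i) => some i
  | _ => none

/-!
In `S_{I_k}` a product of nonzero elements is nonzero exactly when every adjacent pair
`[i, λ][j, γ]` has `λ = j`. So if an evaluation `e` makes `p` nonzero, labelling the vertices
`v₁, v₂` by the two indices of `e v` (and constant-vertices by themselves) gives equal labels
at both ends of every edge of `B(p)`; a component containing indices `i ≠ j` is impossible.
Conversely, when all components are consistent, give each component the index of its
constants (any index if it has none) and send `v` to `[label v₁, label v₂]`: adjacent letters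
then match, and the product is nonzero.
-/

namespace ReesIdentity

variable {k : ℕ} {V : Type}

def Composable (k : ℕ) (a b : Option (Fin k × Fin k)) : Prop :=
  cmulI k a b ≠ none

theorem composable_iff {a b : Option (Fin k × Fin k)} :
    Composable k a b ↔ ∃ l, a.map Prod.snd = some l ∧ b.map Prod.fst = some l := by
  rcases a with _ | ⟨i, l⟩ <;> rcases b with _ | ⟨j, c⟩ <;> simp [Composable, cmulI, eq_comm]

theorem Composable.ne_none {a b : Option (Fin k × Fin k)} (h : Composable k a b) : a ≠ none := by
  rintro rfl; exact h rfl

theorem composable_cmulI_iff {a b c : Option (Fin k × Fin k)} (h : Composable k a b) :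
    Composable k (cmulI k a b) c ↔ Composable k b c := by
  rcases a with _ | ⟨i, l⟩ <;> rcases b with _ | ⟨j, m⟩ <;> rcases c with _ | ⟨n, r⟩ <;>
    simp_all [Composable, cmulI]

theorem foldl_cmulI_ne_none_iff {a : Option (Fin k × Fin k)} {L : List (Option (Fin k × Fin k))} :
    L.foldl (cmulI k) a ≠ none ↔ a ≠ none ∧ (a :: L).IsChain (Composable k) := by
  induction L generalizing a with
  | nil => simp
  | cons b L ih =>
    rw [List.foldl_cons, ih, List.isChain_cons_cons, List.isChain_cons, List.isChain_cons]
    constructor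
    · rintro ⟨hab, hhead, hL⟩
      exact ⟨Composable.ne_none hab, hab, fun c hc => (composable_cmulI_iff hab).1 (hhead c hc), hL⟩
    · rintro ⟨-, hab, hhead, hL⟩
      exact ⟨hab, fun c hc => (composable_cmulI_iff hab).2 (hhead c hc), hL⟩

theorem isChain_of_prodWith_ne_zero {L : List (Option (Fin k × Fin k))}
    (h : prodWith (cmulI k) L ≠ some none) : L.IsChain (Composable k) := by
  rcases L with _ | ⟨a, L⟩
  · exact List.isChain_nil
  · exact (foldl_cmulI_ne_none_iff.1 fun h0 => h (congrArg some h0)).2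

theorem prodWith_ne_zero_of_isChain {L : List (Option (Fin k × Fin k))} (hL : ∀ a ∈ L, a ≠ none)
    (h : L.IsChain (Composable k)) : prodWith (cmulI k) L ≠ some none := by
  rcases L with _ | ⟨a, L⟩
  · simp [prodWith]
  · have := foldl_cmulI_ne_none_iff.2 ⟨hL a List.mem_cons_self, h⟩
    simpa [prodWith] using this

theorem isChain_map_iff_forall_consec {α β : Type} {R : β → β → Prop} {f : α → β} {w : List α} :
    (w.map f).IsChain R ↔ ∀ x y, consec w x y → R (f x) (f y) := by
  rw [List.isChain_map, List.isChain_iff_forall_rel_of_append_cons_cons]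
  exact ⟨fun h x y ⟨l₁, l₂, hw⟩ => h hw, fun h x y l₁ l₂ hw => h x y ⟨l₁, l₂, hw⟩⟩

theorem reachB_symm {w : List (V ⊕ (Fin k × Fin k))} {a b : (V ⊕ Fin k) ⊕ (V ⊕ Fin k)}
    (h : reachB w a b) : reachB w b a :=
  haveI : Std.Symm (edgeB w) := ⟨fun _ _ ⟨x, y, hc, hor⟩ => ⟨x, y, hc, hor.symm⟩⟩
  Relation.ReflTransGen.stdSymm.symm _ _ h

def evalLetter (e : V → Option (Fin k × Fin k)) : V ⊕ (Fin k × Fin k) → Option (Fin k × Fin k) :=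
  Sum.elim e some

def vertexLabel (e : V → Option (Fin k × Fin k)) : (V ⊕ Fin k) ⊕ (V ⊕ Fin k) → Option (Fin k)
  | .inl (.inl v) => (e v).map Prod.fst
  | .inl (.inr i) => some i
  | .inr (.inl v) => (e v).map Prod.snd
  | .inr (.inr l) => some l

theorem vertexLabel_inl_fstV (e : V → Option (Fin k × Fin k)) (x : V ⊕ (Fin k × Fin k)) :
    vertexLabel e (.inl (fstV x)) = (evalLetter e x).map Prod.fst := by
  rcases x with v | ⟨i, l⟩ <;> rfl

theorem vertexLabel_inr_sndV (e : V → Option (Fin k × Fin k)) (x : V ⊕ (Fin k × Fin k)) :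
    vertexLabel e (.inr (sndV x)) = (evalLetter e x).map Prod.snd := by
  rcases x with v | ⟨i, l⟩ <;> rfl

theorem vertexLabel_of_constVal (e : V → Option (Fin k × Fin k))
    {u : (V ⊕ Fin k) ⊕ (V ⊕ Fin k)} {i : Fin k} (hu : constVal u = some i) :
    vertexLabel e u = some i := by
  rcases u with (v | j) | (v | j) <;> simp_all [constVal, vertexLabel]

theorem vertexLabel_eq_of_reachB {e : V → Option (Fin k × Fin k)} {p : List (V ⊕ (Fin k × Fin k))}
    (hp : (p.map (evalLetter e)).IsChain (Composable k)) {u v : (V ⊕ Fin k) ⊕ (V ⊕ Fin k)}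
    (huv : reachB p u v) : vertexLabel e u = vertexLabel e v := by
  induction huv with
  | refl => rfl
  | tail _ hedge ih =>
    rw [ih]
    obtain ⟨x, y, hxy, hends⟩ := hedge
    obtain ⟨l, hx, hy⟩ := composable_iff.1 (isChain_map_iff_forall_consec.1 hp x y hxy)
    have hlabel : vertexLabel e (.inr (sndV x)) = vertexLabel e (.inl (fstV y)) := by
      rw [vertexLabel_inl_fstV, vertexLabel_inr_sndV, hx, hy]
    rcases hends with ⟨rfl, rfl⟩ | ⟨rfl, rfl⟩
    · exact hlabel
    · exact hlabel.symm

def ComponentsConsistent (p : List (V ⊕ (Fin k × Fin k))) : Prop :=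
  ∀ a b (i j : Fin k), constVal a = some i → constVal b = some j → reachB p a b → i = j

theorem componentsConsistent_of_prodWith_ne_zero {p : List (V ⊕ (Fin k × Fin k))}
    {e : V → Option (Fin k × Fin k)} (he : prodWith (cmulI k) (p.map (evalLetter e)) ≠ some none) :
    ComponentsConsistent p := by
  intro a b i j ha hb hab
  have := vertexLabel_eq_of_reachB (isChain_of_prodWith_ne_zero he) hab
  rwa [vertexLabel_of_constVal e ha, vertexLabel_of_constVal e hb, Option.some_inj] at this

open Classical in
noncomputable def componentLabel (d : Fin k) (p : List (V ⊕ (Fin k × Fin k)))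
    (u : (V ⊕ Fin k) ⊕ (V ⊕ Fin k)) : Fin k :=
  if h : ∃ i : Fin k, ∃ x, reachB p u x ∧ constVal x = some i then h.choose else d

theorem componentLabel_eq_of_constVal {d : Fin k} {p : List (V ⊕ (Fin k × Fin k))}
    (hp : ComponentsConsistent p) {u x : (V ⊕ Fin k) ⊕ (V ⊕ Fin k)} {i : Fin k}
    (hux : reachB p u x) (hx : constVal x = some i) : componentLabel d p u = i := by
  have h : ∃ i : Fin k, ∃ x, reachB p u x ∧ constVal x = some i := ⟨i, x, hux, hx⟩
  obtain ⟨x', hux', hx'⟩ := h.choose_spec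
  rw [componentLabel, dif_pos h]
  exact hp x' x _ _ hx' hx ((reachB_symm hux').trans hux)

theorem componentLabel_eq_of_reachB {d : Fin k} {p : List (V ⊕ (Fin k × Fin k))}
    (hp : ComponentsConsistent p) {u v : (V ⊕ Fin k) ⊕ (V ⊕ Fin k)} (huv : reachB p u v) :
    componentLabel d p u = componentLabel d p v := by
  by_cases h : ∃ i : Fin k, ∃ x, reachB p u x ∧ constVal x = some i
  · obtain ⟨i, x, hux, hx⟩ := h
    rw [componentLabel_eq_of_constVal hp hux hx,
      componentLabel_eq_of_constVal hp ((reachB_symm huv).trans hux) hx]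
  · have h' : ¬∃ i : Fin k, ∃ x, reachB p v x ∧ constVal x = some i :=
      fun ⟨i, x, hvx, hx⟩ => h ⟨i, x, huv.trans hvx, hx⟩
    rw [componentLabel, componentLabel, dif_neg h, dif_neg h']

noncomputable def componentEval (d : Fin k) (p : List (V ⊕ (Fin k × Fin k))) :
    V → Option (Fin k × Fin k) :=
  fun v => some (componentLabel d p (.inl (.inl v)), componentLabel d p (.inr (.inl v)))

theorem evalLetter_componentEval {d : Fin k} {p : List (V ⊕ (Fin k × Fin k))}
    (hp : ComponentsConsistent p) (x : V ⊕ (Fin k × Fin k)) :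
    evalLetter (componentEval d p) x =
      some (componentLabel d p (.inl (fstV x)), componentLabel d p (.inr (sndV x))) := by
  rcases x with v | ⟨i, l⟩
  · rfl
  · rw [componentLabel_eq_of_constVal hp .refl rfl, componentLabel_eq_of_constVal hp .refl rfl]
    rfl

theorem prodWith_componentEval_ne_zero (d : Fin k) {p : List (V ⊕ (Fin k × Fin k))}
    (hp : ComponentsConsistent p) :
    prodWith (cmulI k) (p.map (evalLetter (componentEval d p))) ≠ some none := by
  refine prodWith_ne_zero_of_isChain ?_ (isChain_map_iff_forall_consec.2 fun x y hxy => ?_)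
  · simp only [List.mem_map]
    rintro _ ⟨x, -, rfl⟩
    simp [evalLetter_componentEval hp]
  · have hedge : reachB p (.inr (sndV x)) (.inl (fstV y)) := .single ⟨x, y, hxy, .inl ⟨rfl, rfl⟩⟩
    rw [evalLetter_componentEval hp, evalLetter_componentEval hp, composable_iff]
    exact ⟨_, rfl, by rw [Option.map_some, componentLabel_eq_of_reachB hp hedge]⟩

end ReesIdentity

open ReesIdentity

theorem stmt15_general (k : ℕ) (hk : 2 ≤ k) (V : Type)
    (p : List (V ⊕ (Fin k × Fin k))) :
    (∀ e : V → Option (Fin k × Fin k),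
        prodWith (cmulI k)
          (p.map (Sum.elim e (fun c => some c))) = some none) ↔
    ∃ (a b : (V ⊕ Fin k) ⊕ (V ⊕ Fin k)) (i j : Fin k), i ≠ j ∧
      constVal a = some i ∧ constVal b = some j ∧ reachB p a b := by
  constructor
  · intro hzero
    by_contra hincons
    have hp : ComponentsConsistent p := fun a b i j ha hb hab =>
      by_contra fun hij => hincons ⟨a, b, i, j, hij, ha, hb, hab⟩
    exact prodWith_componentEval_ne_zero ⟨0, by omega⟩ hp (hzero _)
  · rintro ⟨a, b, i, j, hij, ha, hb, hab⟩ e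
    by_contra he
    exact hij (componentsConsistent_of_prodWith_ne_zero he a b i j ha hb hab)

/-- For `k ≥ 2`, a polynomial `p` over `S_{I_k}` (a nonempty word in variables and
nonzero constants) is identically 0 iff some connected component of `B(p)` is not
consistent, i.e. contains constant-vertices with distinct indices. -/
theorem stmt15 (k : ℕ) (hk : 2 ≤ k) (V : Type)
    (p : List (V ⊕ (Fin k × Fin k))) (hp : p ≠ []) :
    (∀ e : V → Option (Fin k × Fin k),
        prodWith (cmulI k)
          (p.map (Sum.elim e (fun c => some c))) = some none) ↔
    ∃ (a b : (V ⊕ Fin k) ⊕ (V ⊕ Fin k)) (i j : Fin k), i ≠ j ∧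
      constVal a = some i ∧ constVal b = some j ∧ reachB p a b :=
  stmt15_general k hk V p
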